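/- Let F in M_{m,n}(ℂ) have rank r with singular value decomposition F = VΣW*, and let X be a partial isometry with F = X|F|. Then X = V [[I_r, 0],[0, S]] W* for some partial isometry S in M_{m-r,n-r}(ℂ), and conversely every such X satisfies F = X|F|. -/

import Mathlib

/-!
Write `X = V Y Wᴴ`. Both conditions pass to `Y`: `X` is a partial isometry iff `Y Yᴴ Y = Y`, and
since `|F| = W |Σ| Wᴴ` with `|Σ| = diag(s₁, …, s_r, 0, …)`, the equation `F = X |F|` says exactly
that the first `r` columns of `Y` are those of the identity. In block form `Y = [[1, B], [0, S]]`,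
and the upper left block of `Y Yᴴ Y` is `1 + B Bᴴ`, so `Y Yᴴ Y = Y` forces `B = 0` and `S Sᴴ S = S`.
-/

open Matrix BigOperators
open scoped ComplexOrder

noncomputable def sortDesc {q : ℕ} (x : Fin q → ℝ) : Fin q → ℝ :=
  fun i => (x ∘ Tuple.sort x) i.rev

noncomputable def sval {m n : ℕ} (F : Matrix (Fin m) (Fin n) ℂ) :
    Fin (min m n) → ℝ :=
  fun i => Real.sqrt (sortDesc (Matrix.posSemidef_conjTranspose_mul_self F).isHermitian.eigenvalues
    ⟨i, lt_of_lt_of_le i.isLt (min_le_right m n)⟩)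

def IsPartialIsometry {m n : ℕ} (X : Matrix (Fin m) (Fin n) ℂ) : Prop :=
  ∀ f ∈ (LinearMap.ker (Matrix.toEuclideanLin X))ᗮ, ‖Matrix.toEuclideanLin X f‖ = ‖f‖

noncomputable def matAbs {m n : ℕ} (F : Matrix (Fin m) (Fin n) ℂ) :
    Matrix (Fin n) (Fin n) ℂ :=
  (Matrix.posSemidef_conjTranspose_mul_self F).isHermitian.eigenvectorUnitary *
    Matrix.diagonal ((↑) ∘ Real.sqrt ∘ (Matrix.posSemidef_conjTranspose_mul_self F).isHermitian.eigenvalues : Fin n → ℂ) *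
    (star (Matrix.posSemidef_conjTranspose_mul_self F).isHermitian.eigenvectorUnitary : Matrix (Fin n) (Fin n) ℂ)

noncomputable def svdSigma {m n : ℕ} (F : Matrix (Fin m) (Fin n) ℂ) :
    Matrix (Fin m) (Fin n) ℂ :=
  fun i j => if h : (i : ℕ) = (j : ℕ) ∧ (i : ℕ) < min m n
    then (sval F ⟨i, h.2⟩ : ℂ) else 0

def IsSVD {m n : ℕ} (F : Matrix (Fin m) (Fin n) ℂ)
    (V : Matrix (Fin m) (Fin m) ℂ) (W : Matrix (Fin n) (Fin n) ℂ) : Prop :=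
  V ∈ Matrix.unitaryGroup (Fin m) ℂ ∧ W ∈ Matrix.unitaryGroup (Fin n) ℂ ∧
    F = V * svdSigma F * Wᴴ

def blockIso {m n : ℕ} (r : ℕ) (S : Matrix (Fin (m - r)) (Fin (n - r)) ℂ) :
    Matrix (Fin m) (Fin n) ℂ :=
  fun i j =>
    if (i : ℕ) < r ∧ (j : ℕ) < r then (if (i : ℕ) = (j : ℕ) then 1 else 0)
    else if h : r ≤ (i : ℕ) ∧ r ≤ (j : ℕ) then
      S ⟨(i : ℕ) - r, by have := i.isLt; omega⟩ ⟨(j : ℕ) - r, by have := j.isLt; omega⟩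
    else 0

def submajW {q : ℕ} (x y : Fin q → ℝ) : Prop :=
  ∀ k : ℕ, k ≤ q →
    (∑ i : Fin q, if (i : ℕ) < k then sortDesc x i else 0) ≤
      (∑ i : Fin q, if (i : ℕ) < k then sortDesc y i else 0)

structure SymmGauge (q : ℕ) where
  Φ : (Fin q → ℝ) → ℝ
  add_le : ∀ x y, Φ (x + y) ≤ Φ x + Φ y
  smul_eq : ∀ (c : ℝ) x, Φ (c • x) = |c| * Φ x
  eq_zero : ∀ x, Φ x = 0 → x = 0
  symm : ∀ (σ : Equiv.Perm (Fin q)) (ε : Fin q → ℝ) (x : Fin q → ℝ),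
    (∀ i, ε i = 1 ∨ ε i = -1) → Φ (fun i => ε i * x (σ i)) = Φ x

def SymmGauge.StrictlyConvex {q : ℕ} (G : SymmGauge q) : Prop :=
  ∀ x y, x ≠ y → G.Φ x = 1 → G.Φ y = 1 →
    ∀ t : ℝ, 0 < t → t < 1 → G.Φ (t • x + (1 - t) • y) < 1

noncomputable def gaugeNorm {m n : ℕ} (G : SymmGauge (min m n))
    (M : Matrix (Fin m) (Fin n) ℂ) : ℝ :=
  G.Φ (sval M)

noncomputable def projMat {m : ℕ} (S : Submodule ℂ (EuclideanSpace ℂ (Fin m))) :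
    Matrix (Fin m) (Fin m) ℂ :=
  Matrix.toEuclideanLin.symm (S.subtype ∘ₗ (S.orthogonalProjectionOnto).toLinearMap)

noncomputable def frobNorm {m n : ℕ} (M : Matrix (Fin m) (Fin n) ℂ) : ℝ :=
  Real.sqrt (∑ i, ∑ j, ‖M i j‖ ^ 2)

def IsMinPI {m n : ℕ} (G : SymmGauge (min m n)) (F : Matrix (Fin m) (Fin n) ℂ)
    (k : ℕ) (X : Matrix (Fin m) (Fin n) ℂ) : Prop :=
  IsPartialIsometry X ∧ X.rank = k ∧
    ∀ Y : Matrix (Fin m) (Fin n) ℂ, IsPartialIsometry Y → Y.rank = k →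
      gaugeNorm G (F - X) ≤ gaugeNorm G (F - Y)

def TriConstr {q : ℕ} (k : ℕ) (x : Fin q → ℝ) : Prop :=
  (∀ j, x j = -1 ∨ x j = 0 ∨ x j = 1) ∧ {j : Fin q | x j ≠ 0}.ncard = k


section PartialIsometry

open LinearMap
open scoped InnerProductSpace

variable {𝕜 E F : Type*} [RCLike 𝕜] [NormedAddCommGroup E] [InnerProductSpace 𝕜 E]
  [FiniteDimensional 𝕜 E] [NormedAddCommGroup F] [InnerProductSpace 𝕜 F] [FiniteDimensional 𝕜 F]

theorem LinearMap.adjoint_apply_apply_sub_mem_orthogonal_ker (T : E →ₗ[𝕜] F) {f : E}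
    (hf : f ∈ (ker T)ᗮ) : adjoint T (T f) - f ∈ (ker T)ᗮ :=
  sub_mem (T.orthogonal_ker ▸ mem_range_self _ _) hf

theorem LinearMap.norm_map_on_orthogonal_ker_iff (T : E →ₗ[𝕜] F) :
    (∀ f ∈ (ker T)ᗮ, ‖T f‖ = ‖f‖) ↔ ∀ f ∈ (ker T)ᗮ, adjoint T (T f) = f := by
  constructor
  · intro h f hf
    have hinner : ∀ g ∈ (ker T)ᗮ, ⟪T f, T g⟫_𝕜 = ⟪f, g⟫_𝕜 := fun g hg =>
      (norm_map_iff_inner_map_map (T ∘ₗ (ker T)ᗮ.subtype)).mp (fun x => h x x.2) ⟨f, hf⟩ ⟨g, hg⟩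
    have hu := T.adjoint_apply_apply_sub_mem_orthogonal_ker hf
    have hzero : ⟪adjoint T (T f) - f, adjoint T (T f) - f⟫_𝕜 = 0 := by
      rw [inner_sub_left, adjoint_inner_left, hinner _ hu, sub_self]
    exact sub_eq_zero.mp (inner_self_eq_zero.mp hzero)
  · intro h f hf
    rw [@norm_eq_sqrt_re_inner 𝕜, @norm_eq_sqrt_re_inner 𝕜 _ _ _ _ f, ← adjoint_inner_left, h f hf]

theorem LinearMap.comp_adjoint_comp_self_eq_iff (T : E →ₗ[𝕜] F) :
    T ∘ₗ adjoint T ∘ₗ T = T ↔ ∀ f ∈ (ker T)ᗮ, adjoint T (T f) = f := by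
  constructor
  · intro h f hf
    have hker : adjoint T (T f) - f ∈ ker T := by
      rw [mem_ker, map_sub, sub_eq_zero]
      exact LinearMap.congr_fun h f
    exact sub_eq_zero.mp (inner_self_eq_zero.mp
      (T.adjoint_apply_apply_sub_mem_orthogonal_ker hf _ hker))
  · intro h
    ext x
    obtain ⟨k, hk, g, hg, rfl⟩ := (ker T).exists_add_mem_mem_orthogonal x
    simp [mem_ker.mp hk, h g hg]

theorem LinearMap.norm_map_on_orthogonal_ker_iff_comp_adjoint_comp_self (T : E →ₗ[𝕜] F) :
    (∀ f ∈ (ker T)ᗮ, ‖T f‖ = ‖f‖) ↔ T ∘ₗ adjoint T ∘ₗ T = T :=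
  T.norm_map_on_orthogonal_ker_iff.trans T.comp_adjoint_comp_self_eq_iff.symm

end PartialIsometry

theorem Matrix.toEuclideanLin_mul {𝕜 l m n : Type*} [RCLike 𝕜] [Fintype m] [DecidableEq m]
    [Fintype n] [DecidableEq n] (A : Matrix l m 𝕜) (B : Matrix m n 𝕜) :
    toEuclideanLin (A * B) = toEuclideanLin A ∘ₗ toEuclideanLin B := by
  ext v : 1
  simp

theorem isPartialIsometry_iff_mul_conjTranspose_mul {m n : ℕ} (X : Matrix (Fin m) (Fin n) ℂ) :
    IsPartialIsometry X ↔ X * Xᴴ * X = X := by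
  rw [IsPartialIsometry, LinearMap.norm_map_on_orthogonal_ker_iff_comp_adjoint_comp_self,
    ← toEuclideanLin_conjTranspose_eq_adjoint, ← toEuclideanLin_mul, ← toEuclideanLin_mul,
    ← Matrix.mul_assoc, toEuclideanLin.injective.eq_iff]

section Unitary

variable {α ι κ : Type*} [CommRing α] [StarRing α] [Fintype ι] [DecidableEq ι] [Fintype κ]
  [DecidableEq κ] {V : Matrix ι ι α} {W : Matrix κ κ α}

theorem Matrix.mul_mul_conjTranspose_inj (hV : V ∈ unitaryGroup ι α) (hW : W ∈ unitaryGroup κ α)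
    {A B : Matrix ι κ α} : V * A * Wᴴ = V * B * Wᴴ ↔ A = B := by
  refine ⟨fun h => ?_, fun h => h ▸ rfl⟩
  have hV' : Vᴴ * V = 1 := mem_unitaryGroup_iff'.mp hV
  have hW' : Wᴴ * W = 1 := mem_unitaryGroup_iff'.mp hW
  simpa [← Matrix.mul_assoc, hV', hW', Matrix.mul_assoc _ Wᴴ W] using
    congrArg (fun M => Vᴴ * M * W) h

theorem Matrix.exists_eq_mul_mul_conjTranspose (hV : V ∈ unitaryGroup ι α)
    (hW : W ∈ unitaryGroup κ α) (X : Matrix ι κ α) : ∃ Y : Matrix ι κ α, X = V * Y * Wᴴ := by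
  refine ⟨Vᴴ * X * W, ?_⟩
  have hV' : V * Vᴴ = 1 := mem_unitaryGroup_iff.mp hV
  have hW' : W * Wᴴ = 1 := mem_unitaryGroup_iff.mp hW
  simp [← Matrix.mul_assoc, hV', Matrix.mul_assoc _ W Wᴴ, hW']

theorem Matrix.mul_mul_conjTranspose_triple (hV : V ∈ unitaryGroup ι α)
    (hW : W ∈ unitaryGroup κ α) (Y : Matrix ι κ α) :
    V * Y * Wᴴ * (V * Y * Wᴴ)ᴴ * (V * Y * Wᴴ) = V * (Y * Yᴴ * Y) * Wᴴ := by
  have hV' : Vᴴ * V = 1 := mem_unitaryGroup_iff'.mp hV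
  have hW' : Wᴴ * W = 1 := mem_unitaryGroup_iff'.mp hW
  simp only [conjTranspose_mul, conjTranspose_conjTranspose, ← Matrix.mul_assoc]
  rw [Matrix.mul_assoc _ Wᴴ W, hW', Matrix.mul_one, Matrix.mul_assoc _ Vᴴ V, hV', Matrix.mul_one]

end Unitary

theorem Matrix.conjTranspose_mul_self_mul_mul_conjTranspose {α ι κ : Type*} [CommRing α]
    [StarRing α] [Fintype ι] [DecidableEq ι] [Fintype κ] {V : Matrix ι ι α}
    (hV : V ∈ unitaryGroup ι α) (A : Matrix ι κ α) (W : Matrix κ κ α) :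
    (V * A * Wᴴ)ᴴ * (V * A * Wᴴ) = W * (Aᴴ * A) * Wᴴ := by
  have hV' : Vᴴ * V = 1 := mem_unitaryGroup_iff'.mp hV
  simp only [conjTranspose_mul, conjTranspose_conjTranspose, ← Matrix.mul_assoc]
  rw [Matrix.mul_assoc _ Vᴴ V, hV', Matrix.mul_one]

theorem isPartialIsometry_mul_mul_conjTranspose_iff {m n : ℕ} {V : Matrix (Fin m) (Fin m) ℂ}
    {W : Matrix (Fin n) (Fin n) ℂ} (hV : V ∈ unitaryGroup (Fin m) ℂ)
    (hW : W ∈ unitaryGroup (Fin n) ℂ) (Y : Matrix (Fin m) (Fin n) ℂ) :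
    IsPartialIsometry (V * Y * Wᴴ) ↔ IsPartialIsometry Y := by
  simp only [isPartialIsometry_iff_mul_conjTranspose_mul, mul_mul_conjTranspose_triple hV hW,
    mul_mul_conjTranspose_inj hV hW]

theorem Matrix.mul_diagonal_eq_mul_diagonal_iff {R l n : Type*} [Ring R] [NoZeroDivisors R]
    [Fintype n] [DecidableEq n] {M N : Matrix l n R} {d : n → R} :
    M * diagonal d = N * diagonal d ↔ ∀ i j, d j ≠ 0 → M i j = N i j := by
  simp only [← Matrix.ext_iff, mul_diagonal]
  refine forall₂_congr fun i j => ⟨fun h hj => mul_right_cancel₀ hj h, fun h => ?_⟩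
  by_cases hj : d j = 0
  · simp [hj]
  · rw [h hj]

theorem Matrix.fromBlocks_one_zero_triple_eq_self_iff {𝕜 l m n : Type*} [RCLike 𝕜] [Fintype l]
    [DecidableEq l] [Fintype m] [Fintype n] (B : Matrix l n 𝕜) (S : Matrix m n 𝕜) :
    fromBlocks (1 : Matrix l l 𝕜) B 0 S * (fromBlocks (1 : Matrix l l 𝕜) B 0 S)ᴴ *
        fromBlocks (1 : Matrix l l 𝕜) B 0 S = fromBlocks 1 B 0 S ↔
      B = 0 ∧ S * Sᴴ * S = S := by
  constructor
  · intro h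
    simp only [fromBlocks_conjTranspose, fromBlocks_multiply] at h
    obtain ⟨hBB, -, -, hS⟩ := fromBlocks_inj.mp h
    obtain rfl : B = 0 := by simpa using hBB
    simpa using hS
  · rintro ⟨rfl, hS⟩
    simp [fromBlocks_conjTranspose, fromBlocks_multiply, hS]

section BlockIso

variable {m n p r : ℕ}

def finSumSubEquiv (h : r ≤ m) : Fin r ⊕ Fin (m - r) ≃ Fin m :=
  finSumFinEquiv.trans (finCongr (Nat.add_sub_cancel' h))

theorem blockIso_eq_reindex (hrm : r ≤ m) (hrn : r ≤ n)
    (S : Matrix (Fin (m - r)) (Fin (n - r)) ℂ) :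
    blockIso r S = reindex (finSumSubEquiv hrm) (finSumSubEquiv hrn) (fromBlocks 1 0 0 S) := by
  ext i j
  obtain ⟨a, rfl⟩ := (finSumSubEquiv hrm).surjective i
  obtain ⟨b, rfl⟩ := (finSumSubEquiv hrn).surjective j
  rcases a with a | a <;> rcases b with b | b <;>
    simp [blockIso, finSumSubEquiv, one_apply, Fin.ext_iff]

theorem blockIso_mul_blockIso (hrm : r ≤ m) (hrn : r ≤ n) (hrp : r ≤ p)
    (S : Matrix (Fin (m - r)) (Fin (n - r)) ℂ) (T : Matrix (Fin (n - r)) (Fin (p - r)) ℂ) :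
    blockIso r S * blockIso r T = blockIso r (S * T) := by
  simp [blockIso_eq_reindex hrm hrn, blockIso_eq_reindex hrn hrp, blockIso_eq_reindex hrm hrp,
    fromBlocks_multiply]

theorem conjTranspose_blockIso (hrm : r ≤ m) (hrn : r ≤ n)
    (S : Matrix (Fin (m - r)) (Fin (n - r)) ℂ) : (blockIso r S)ᴴ = blockIso r Sᴴ := by
  simp [blockIso_eq_reindex hrm hrn, blockIso_eq_reindex hrn hrm, fromBlocks_conjTranspose]

theorem blockIso_zero_apply (i : Fin m) (j : Fin n) :
    blockIso r (0 : Matrix (Fin (m - r)) (Fin (n - r)) ℂ) i j =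
      if (i : ℕ) = j ∧ (j : ℕ) < r then 1 else 0 := by
  simp only [blockIso, Matrix.zero_apply]
  split_ifs <;> simp_all

theorem blockIso_zero_eq_diagonal :
    (blockIso r 0 : Matrix (Fin n) (Fin n) ℂ) =
      diagonal fun j : Fin n => if (j : ℕ) < r then (1 : ℂ) else 0 := by
  ext i j
  rw [blockIso_zero_apply, diagonal_apply]
  split_ifs <;> simp_all [Fin.ext_iff]; omega

theorem mul_blockIso_zero_eq_iff (hrm : r ≤ m) (hrn : r ≤ n) (Y : Matrix (Fin m) (Fin n) ℂ) :
    Y * (blockIso r 0 : Matrix (Fin n) (Fin n) ℂ) = blockIso r 0 ↔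
      ∀ i (j : Fin n), (j : ℕ) < r → Y i j = if (i : ℕ) = j then 1 else 0 := by
  have hPP := blockIso_mul_blockIso hrm hrn hrn (0 : Matrix (Fin (m - r)) (Fin (n - r)) ℂ)
    (0 : Matrix (Fin (n - r)) (Fin (n - r)) ℂ)
  rw [Matrix.mul_zero] at hPP
  conv_lhs => rw [← hPP]
  rw [blockIso_zero_eq_diagonal, mul_diagonal_eq_mul_diagonal_iff]
  refine forall₂_congr fun i j => ?_
  by_cases hj : (j : ℕ) < r <;> simp [hj, blockIso_zero_apply]

theorem exists_blockIso_iff (hrm : r ≤ m) (hrn : r ≤ n) (Y : Matrix (Fin m) (Fin n) ℂ) :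
    (Y * Yᴴ * Y = Y ∧ Y * (blockIso r 0 : Matrix (Fin n) (Fin n) ℂ) = blockIso r 0) ↔
      ∃ S : Matrix (Fin (m - r)) (Fin (n - r)) ℂ, S * Sᴴ * S = S ∧ Y = blockIso r S := by
  constructor
  · rintro ⟨hY, hcol⟩
    obtain ⟨Y, rfl⟩ := (reindex (finSumSubEquiv hrm) (finSumSubEquiv hrn)).surjective Y
    obtain ⟨A, B, C, S, rfl⟩ : ∃ A B C S, Y = fromBlocks A B C S :=
      ⟨_, _, _, _, (fromBlocks_toBlocks Y).symm⟩
    simp only [blockIso_eq_reindex hrm hrn, blockIso_eq_reindex hrn hrn, reindex_apply,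
      submatrix_mul_equiv, fromBlocks_multiply, Matrix.mul_one, Matrix.mul_zero, add_zero] at hcol
    obtain ⟨rfl, -, rfl, -⟩ := fromBlocks_inj.mp ((reindex _ _).injective hcol)
    simp only [reindex_apply, conjTranspose_submatrix, submatrix_mul_equiv] at hY
    obtain ⟨rfl, hS⟩ := (fromBlocks_one_zero_triple_eq_self_iff B S).mp ((reindex _ _).injective hY)
    exact ⟨S, hS, (blockIso_eq_reindex hrm hrn S).symm⟩
  · rintro ⟨S, hS, rfl⟩
    rw [conjTranspose_blockIso hrm hrn, blockIso_mul_blockIso hrm hrn hrm,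
      blockIso_mul_blockIso hrm hrm hrn, hS, blockIso_mul_blockIso hrm hrn hrn, Matrix.mul_zero]
    exact ⟨rfl, rfl⟩

end BlockIso

theorem Antitone.ne_zero_iff_lt_card {q r : ℕ} {y : Fin q → ℝ} (hy : Antitone y)
    (h0 : ∀ i, 0 ≤ y i) (hcard : Fintype.card {i // y i ≠ 0} = r) (j : Fin q) :
    y j ≠ 0 ↔ (j : ℕ) < r := by
  classical
  have hS : (Finset.univ.filter fun i => y i ≠ 0).card = r := by
    rw [← hcard, Fintype.card_subtype]
  constructor
  · intro hj
    have hsub : Finset.Iic j ⊆ Finset.univ.filter fun i => y i ≠ 0 := fun i hi => by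
      have := hy (Finset.mem_Iic.mp hi)
      simp only [Finset.mem_filter, Finset.mem_univ, true_and]
      exact ((h0 j).lt_of_ne' hj |>.trans_le this).ne'
    have := Finset.card_le_card hsub
    rw [Fin.card_Iic, hS] at this
    omega
  · intro hjr hj
    have hsub : (Finset.univ.filter fun i => y i ≠ 0) ⊆ Finset.Iio j := fun i hi => by
      simp only [Finset.mem_filter, Finset.mem_univ, true_and] at hi
      simp only [Finset.mem_Iio]
      by_contra hij
      exact hi (le_antisymm (hj ▸ hy (not_lt.mp hij)) (h0 i))
    have := Finset.card_le_card hsub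
    rw [Fin.card_Iio, hS] at this
    omega

theorem sortDesc_eq_comp_perm {q : ℕ} (x : Fin q → ℝ) :
    ∃ σ : Equiv.Perm (Fin q), sortDesc x = x ∘ σ :=
  ⟨Fin.revPerm.trans (Tuple.sort x), rfl⟩

theorem sortDesc_antitone {q : ℕ} (x : Fin q → ℝ) : Antitone (sortDesc x) :=
  fun _ _ hij => Tuple.monotone_sort x (Fin.rev_le_rev.mpr hij)

section SingularValues

variable {m n r : ℕ} {F : Matrix (Fin m) (Fin n) ℂ}

/-- `sval F` is the restriction of this vector to the first `min m n` indices. -/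
noncomputable def svalExt (F : Matrix (Fin m) (Fin n) ℂ) : Fin n → ℝ :=
  fun j => Real.sqrt (sortDesc (posSemidef_conjTranspose_mul_self F).isHermitian.eigenvalues j)

noncomputable def svalDiag (F : Matrix (Fin m) (Fin n) ℂ) : Matrix (Fin n) (Fin n) ℂ :=
  diagonal fun j => (svalExt F j : ℂ)

theorem svalExt_ne_zero_iff (hr : F.rank = r) (j : Fin n) : svalExt F j ≠ 0 ↔ (j : ℕ) < r := by
  set A := posSemidef_conjTranspose_mul_self F
  obtain ⟨σ, hσ⟩ := sortDesc_eq_comp_perm A.isHermitian.eigenvalues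
  have h0 : ∀ i, 0 ≤ sortDesc A.isHermitian.eigenvalues i := fun i => by
    rw [hσ]; exact A.eigenvalues_nonneg _
  have hcard : Fintype.card {i // sortDesc A.isHermitian.eigenvalues i ≠ 0} = r := by
    rw [hσ, ← hr, ← rank_conjTranspose_mul_self, A.isHermitian.rank_eq_card_non_zero_eigs]
    exact Fintype.card_congr (σ.subtypeEquiv fun _ => Iff.rfl)
  rw [svalExt, Real.sqrt_ne_zero (h0 j)]
  exact (sortDesc_antitone _).ne_zero_iff_lt_card h0 hcard j

theorem svalExt_eq_zero_of_le (hr : F.rank = r) {j : Fin n} (hj : r ≤ j) : svalExt F j = 0 :=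
  not_not.mp ((svalExt_ne_zero_iff hr j).not.mpr (Nat.not_lt.mpr hj))

theorem svdSigma_eq_blockIso_mul_svalDiag (hr : F.rank = r) :
    svdSigma F = (blockIso r 0 : Matrix (Fin m) (Fin n) ℂ) * svalDiag F := by
  have hrm : r ≤ m := hr ▸ F.rank_le_height
  ext ⟨i, hi⟩ ⟨j, hj⟩
  simp only [svdSigma, svalDiag, mul_diagonal, blockIso_zero_apply]
  by_cases hij : i = j
  · subst hij
    by_cases hir : i < r
    · rw [dif_pos ⟨rfl, by omega⟩, if_pos ⟨rfl, hir⟩, one_mul]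
      rfl
    · have hs : svalExt F ⟨i, hj⟩ = 0 := svalExt_eq_zero_of_le hr (Nat.not_lt.mp hir)
      rw [hs, Complex.ofReal_zero, mul_zero]
      split_ifs
      · exact_mod_cast hs
      · rfl
  · simp [hij]

theorem blockIso_zero_mul_svalDiag (hr : F.rank = r) :
    (blockIso r 0 : Matrix (Fin n) (Fin n) ℂ) * svalDiag F = svalDiag F := by
  rw [blockIso_zero_eq_diagonal, svalDiag, diagonal_mul_diagonal]
  congr 1
  ext j
  split_ifs with hj
  · rw [one_mul]
  · rw [zero_mul, svalExt_eq_zero_of_le hr (Nat.not_lt.mp hj), Complex.ofReal_zero]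

open scoped MatrixOrder in
theorem matAbs_eq_of_sq {B : Matrix (Fin n) (Fin n) ℂ} (hB : B.PosSemidef) (h : B ^ 2 = Fᴴ * F) :
    matAbs F = B := by
  have hA := posSemidef_conjTranspose_mul_self F
  have hsqrt : matAbs F = cfc Real.sqrt (Fᴴ * F) := by
    rw [hA.1.cfc_eq]
    simp [matAbs, IsHermitian.cfc, Unitary.conjStarAlgAut_apply]
  rw [hsqrt, ← cfcₙ_eq_cfc, ← CFC.sqrt_eq_real_sqrt _ hA.nonneg]
  exact CFC.sqrt_unique (by rw [← h, sq]) hB.nonneg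

variable {V : Matrix (Fin m) (Fin m) ℂ} {W : Matrix (Fin n) (Fin n) ℂ}

theorem matAbs_eq_of_isSVD (hr : F.rank = r) (hSVD : IsSVD F V W) :
    matAbs F = W * svalDiag F * Wᴴ := by
  obtain ⟨hV, hW, hF⟩ := hSVD
  have hrm : r ≤ m := hr ▸ F.rank_le_height
  have hrn : r ≤ n := hr ▸ F.rank_le_width
  have hpos : (W * svalDiag F * Wᴴ).PosSemidef :=
    (posSemidef_diagonal_iff.mpr fun j => Complex.zero_le_real.mpr (Real.sqrt_nonneg _)
      ).mul_mul_conjTranspose_same W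
  have hSigma : (svdSigma F)ᴴ * svdSigma F = (svalDiag F)ᴴ * svalDiag F := by
    rw [svdSigma_eq_blockIso_mul_svalDiag hr, conjTranspose_mul, Matrix.mul_assoc,
      ← Matrix.mul_assoc _ (blockIso r 0), conjTranspose_blockIso hrm hrn,
      blockIso_mul_blockIso hrn hrm hrn, conjTranspose_zero, Matrix.zero_mul,
      blockIso_zero_mul_svalDiag hr]
  refine matAbs_eq_of_sq hpos ?_
  calc (W * svalDiag F * Wᴴ) ^ 2 = (W * svalDiag F * Wᴴ)ᴴ * (W * svalDiag F * Wᴴ) := by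
        rw [hpos.isHermitian.eq, sq]
    _ = (V * svdSigma F * Wᴴ)ᴴ * (V * svdSigma F * Wᴴ) := by
      rw [conjTranspose_mul_self_mul_mul_conjTranspose hW,
        conjTranspose_mul_self_mul_mul_conjTranspose hV, hSigma]
    _ = Fᴴ * F := by rw [← hF]

theorem eq_mul_matAbs_iff (hr : F.rank = r) (hSVD : IsSVD F V W) (Y : Matrix (Fin m) (Fin n) ℂ) :
    F = V * Y * Wᴴ * matAbs F ↔ Y * (blockIso r 0 : Matrix (Fin n) (Fin n) ℂ) = blockIso r 0 := by
  have hrm : r ≤ m := hr ▸ F.rank_le_height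
  have hrn : r ≤ n := hr ▸ F.rank_le_width
  have hYabs : V * Y * Wᴴ * matAbs F = V * (Y * svalDiag F) * Wᴴ := by
    have hW : Wᴴ * W = 1 := mem_unitaryGroup_iff'.mp hSVD.2.1
    rw [matAbs_eq_of_isSVD hr hSVD]
    simp only [← Matrix.mul_assoc]
    rw [Matrix.mul_assoc _ Wᴴ W, hW, Matrix.mul_one]
  calc F = V * Y * Wᴴ * matAbs F
        ↔ V * svdSigma F * Wᴴ = V * (Y * svalDiag F) * Wᴴ := by rw [hYabs, ← hSVD.2.2]
    _ ↔ Y * svalDiag F = (blockIso r 0 : Matrix (Fin m) (Fin n) ℂ) * svalDiag F := by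
      rw [mul_mul_conjTranspose_inj hSVD.1 hSVD.2.1, svdSigma_eq_blockIso_mul_svalDiag hr, eq_comm]
    _ ↔ ∀ i (j : Fin n), (j : ℕ) < r → Y i j = if (i : ℕ) = j then 1 else 0 := by
      rw [svalDiag, mul_diagonal_eq_mul_diagonal_iff]
      refine forall₂_congr fun i j => ?_
      by_cases hj : (j : ℕ) < r <;> simp [hj, svalExt_ne_zero_iff hr, blockIso_zero_apply]
    _ ↔ _ := (mul_blockIso_zero_eq_iff hrm hrn Y).symm

end SingularValues

theorem stmt3 {m n r : ℕ} (F X : Matrix (Fin m) (Fin n) ℂ)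
    (V : Matrix (Fin m) (Fin m) ℂ) (W : Matrix (Fin n) (Fin n) ℂ)
    (hr : F.rank = r) (hSVD : IsSVD F V W) :
    (IsPartialIsometry X ∧ F = X * matAbs F) ↔
      ∃ S : Matrix (Fin (m - r)) (Fin (n - r)) ℂ,
        IsPartialIsometry S ∧ X = V * blockIso r S * Wᴴ := by
  have hrm : r ≤ m := hr ▸ F.rank_le_height
  have hrn : r ≤ n := hr ▸ F.rank_le_width
  have ⟨hV, hW, _⟩ := hSVD
  obtain ⟨Y, rfl⟩ := exists_eq_mul_mul_conjTranspose hV hW X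
  simp only [isPartialIsometry_mul_mul_conjTranspose_iff hV hW,
    isPartialIsometry_iff_mul_conjTranspose_mul, eq_mul_matAbs_iff hr hSVD,
    mul_mul_conjTranspose_inj hV hW]
  exact exists_blockIso_iff hrm hrn Y
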